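/- arXiv:1904.12281 — 2 statements merged into one kernel-verified Lean document; each statement's English description precedes it below -/
import Mathlib

section
/- Define B^{(N)} = B - ∑_{i=1}^N ξ_i^{(N)*}, where (ξ_j^{(N)*}) is the unique maximizer of T_N. Then B^{(N)} > 0 for every N, the sequence (B^{(N)})_N is strictly decreasing in N, and 0 < B^{(N)} < wB/N, so lim_{N→∞} B^{(N)} = 0. -/
open Real

/-- The finite-horizon throughput functional `T_N` (log base 2), evaluated at a
sequence indexed from 1 (only coordinates `1,…,N` matter). -/
noncomputable def TN (B γ p : ℝ) (w N : ℕ) (ξ : ℕ → ℝ) : ℝ :=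
  (∑ k ∈ Finset.Icc 1 w, p ^ 2 * (1 - p) ^ (k - 1) * ((k : ℝ) / 2) *
      Real.logb 2 (1 + γ * B / k))
  + (∑ j ∈ Finset.Icc 1 N, p * (1 - p) ^ (j + w - 1) * (1 / 2) *
      Real.logb 2 (1 + γ * ξ j))
  + (∑ k ∈ Finset.Icc 1 N, p ^ 2 * (1 - p) ^ (k + w - 1) * ((w : ℝ) / 2) *
      Real.logb 2 (1 + (γ / w) * (B - ∑ j ∈ Finset.Icc 1 k, ξ j)))
  + p * (1 - p) ^ (w + N) * ((w : ℝ) / 2) *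
      Real.logb 2 (1 + (γ / w) * (B - ∑ j ∈ Finset.Icc 1 N, ξ j))

/-- The admissible simplex `{ξ : ξ_j ≥ 0, ∑_{j=1}^N ξ_j ≤ B}`, as sequences supported
on coordinates `1,…,N`. -/
def adm (B : ℝ) (N : ℕ) : Set (ℕ → ℝ) :=
  {ξ | (∀ j, 1 ≤ j → j ≤ N → 0 ≤ ξ j) ∧ (∀ j, j = 0 ∨ N < j → ξ j = 0)
      ∧ ∑ j ∈ Finset.Icc 1 N, ξ j ≤ B}

/-!
The maximizer of `T_N` is interior: it serves every slot and leaves part of the battery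
unspent, since otherwise moving a little energy between a slot and the battery would increase
`T_N`. So all partial derivatives of `T_N` vanish there. Solved for the allocation, these
equations say that the last slot receives `1/w` of the remaining battery, `w ξ_N = B^{(N)}`, and
that `1 / (1 + γ ξ_j)` is the `(1 - p, p)`-combination of `1 / (1 + γ ξ_{j+1})` and
`1 / (1 + γ B^{(j)} / w)`. Backward induction along this recursion shows that `ξ_N` is the
smallest allocation, whence `N B^{(N)} / w = N ξ_N ≤ B - B^{(N)} < B`; and that if
`B^{(N+1)} ≥ B^{(N)}`, the optimum for horizon `N + 1`, shifted by one slot, dominates the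
optimum for horizon `N`, which forces `ξ^{(N+1)}_1 ≤ 0`. The limit follows by squeezing.
-/

open Finset

theorem hasDerivAt_logb_one_add_mul (b c y s : ℝ) (h : 1 + c * y ≠ 0) :
    HasDerivAt (fun δ : ℝ => Real.logb b (1 + c * (y + δ * s)))
      (c * s / (1 + c * y) / Real.log b) 0 := by
  have hlin : HasDerivAt (fun δ : ℝ => 1 + c * (y + δ * s)) (c * s) 0 := by
    simpa using (((hasDerivAt_id (0 : ℝ)).mul_const s).const_add y |>.const_mul c).const_add 1
  simpa [Real.logb] using (hlin.log (by simpa using h)).div_const (Real.log b)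

theorem HasDerivAt.mul_sub_nonpos_of_isMaxOn {φ : ℝ → ℝ} {D t y : ℝ} {s : Set ℝ}
    (hφ : HasDerivAt φ D t) (hmax : IsMaxOn φ s t) (hs : Convex ℝ s) (ht : t ∈ s)
    (hy : y ∈ s) : D * (y - t) ≤ 0 := by
  have := hmax.localize.hasFDerivWithinAt_nonpos hφ.hasFDerivAt.hasFDerivWithinAt
    (sub_mem_posTangentConeAt_of_segment_subset (hs.segment_subset ht hy))
  simpa [mul_comm] using this

theorem le_and_le_of_one_div_eq {p a b c : ℝ} (hp : 0 ≤ p) (hp1 : p ≤ 1) (ha : 0 < a)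
    (hab : a ≤ b) (h : 1 / c = (1 - p) / a + p / b) : a ≤ c ∧ c ≤ b := by
  have hb : 0 < b := ha.trans_le hab
  have hba : 1 / b ≤ 1 / a := one_div_le_one_div_of_le ha hab
  have hca : 1 / c ≤ 1 / a := by
    rw [h, div_eq_mul_one_div (1 - p), div_eq_mul_one_div p]; nlinarith
  have hbc : 1 / b ≤ 1 / c := by
    rw [h, div_eq_mul_one_div (1 - p), div_eq_mul_one_div p]; nlinarith
  exact ⟨le_of_one_div_le_one_div (one_div_pos.1 ((one_div_pos.2 hb).trans_le hbc)) hca,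
    le_of_one_div_le_one_div hb hbc⟩

theorem le_of_one_div_eq_of_le {p a b c a' b' c' : ℝ} (hp : 0 ≤ p) (hp1 : p ≤ 1) (ha : 0 < a)
    (hb : 0 < b) (hc' : 0 < c') (h : 1 / c = (1 - p) / a + p / b)
    (h' : 1 / c' = (1 - p) / a' + p / b') (haa : a ≤ a') (hbb : b ≤ b') : c ≤ c' := by
  have h1 : 1 / a' ≤ 1 / a := one_div_le_one_div_of_le ha haa
  have h2 : 1 / b' ≤ 1 / b := one_div_le_one_div_of_le hb hbb
  refine le_of_one_div_le_one_div hc' ?_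
  rw [h, h', div_eq_mul_one_div (1 - p), div_eq_mul_one_div p, div_eq_mul_one_div (1 - p) a,
    div_eq_mul_one_div p b]
  nlinarith

theorem one_add_mul_le_one_add_div_mul_iff {γ w a b : ℝ} (hγ : 0 < γ) (hw : 0 < w) :
    1 + γ * a ≤ 1 + γ / w * b ↔ w * a ≤ b := by
  rw [add_le_add_iff_left, div_mul_eq_mul_div, le_div_iff₀ hw, mul_assoc, mul_comm a,
    mul_le_mul_iff_right₀ hγ]

namespace TN

/-- The paper's `B^{(k)}`: the battery left after the first `k` slots. -/
noncomputable def residual (B : ℝ) (x : ℕ → ℝ) (k : ℕ) : ℝ := B - ∑ i ∈ Icc 1 k, x i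

noncomputable def coefSlot (p : ℝ) (w j : ℕ) : ℝ := p * (1 - p) ^ (j + w - 1) * (1 / 2)

noncomputable def coefResidual (p : ℝ) (w k : ℕ) : ℝ :=
  p ^ 2 * (1 - p) ^ (k + w - 1) * ((w : ℝ) / 2)

noncomputable def coefTerminal (p : ℝ) (w N : ℕ) : ℝ := p * (1 - p) ^ (w + N) * ((w : ℝ) / 2)

variable {B γ p : ℝ} {w N : ℕ} {x : ℕ → ℝ}

theorem TN_eq (B γ p : ℝ) (w N : ℕ) (x : ℕ → ℝ) :
    TN B γ p w N x =
      (∑ k ∈ Icc 1 w, p ^ 2 * (1 - p) ^ (k - 1) * ((k : ℝ) / 2) * Real.logb 2 (1 + γ * B / k))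
      + ∑ j ∈ Icc 1 N, coefSlot p w j * Real.logb 2 (1 + γ * x j)
      + ∑ k ∈ Icc 1 N, coefResidual p w k * Real.logb 2 (1 + γ / w * residual B x k)
      + coefTerminal p w N * Real.logb 2 (1 + γ / w * residual B x N) := rfl

theorem residual_zero (B : ℝ) (x : ℕ → ℝ) : residual B x 0 = B := by
  simp [residual]

theorem residual_succ (B : ℝ) (x : ℕ → ℝ) (k : ℕ) :
    residual B x (k + 1) = residual B x k - x (k + 1) := by
  rw [residual, residual, sum_Icc_succ_top (by omega)]
  ring

theorem residual_add_smul (B δ : ℝ) (x v : ℕ → ℝ) (k : ℕ) :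
    residual B (x + δ • v) k = residual B x k + δ * -∑ i ∈ Icc 1 k, v i := by
  simp only [residual, Pi.add_apply, Pi.smul_apply, smul_eq_mul, sum_add_distrib, ← mul_sum]
  ring

theorem residual_le_residual (hx : ∀ i, 1 ≤ i → i ≤ N → 0 ≤ x i) {j k : ℕ} (hjk : j ≤ k)
    (hk : k ≤ N) : residual B x k ≤ residual B x j := by
  have : ∑ i ∈ Icc 1 j, x i ≤ ∑ i ∈ Icc 1 k, x i :=
    sum_le_sum_of_subset_of_nonneg (Icc_subset_Icc_right hjk) fun i hi _ =>
      hx i (mem_Icc.1 hi).1 ((mem_Icc.1 hi).2.trans hk)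
  simp only [residual]
  linarith

theorem residual_nonneg_of_mem_adm (hx : x ∈ adm B N) {k : ℕ} (hk : k ≤ N) :
    0 ≤ residual B x k :=
  (sub_nonneg.2 hx.2.2).trans (residual_le_residual hx.1 hk le_rfl)

theorem add_smul_single_mem_adm (hx : x ∈ adm B N) {j : ℕ} (hj : 1 ≤ j) (hjN : j ≤ N) {δ : ℝ}
    (hδ : δ ∈ Set.Icc (-x j) (residual B x N)) : x + δ • Pi.single j 1 ∈ adm B N := by
  obtain ⟨hpos, hsupp, -⟩ := hx
  refine ⟨fun i hi hiN => ?_, fun i hi => ?_, ?_⟩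
  · rcases eq_or_ne i j with rfl | hij
    · simpa using neg_le_iff_add_nonneg'.1 hδ.1
    · simpa [hij] using hpos i hi hiN
  · have hij : i ≠ j := by omega
    simpa [hij] using hsupp i hi
  · have key : residual B (x + δ • Pi.single j 1) N = residual B x N - δ := by
      rw [residual_add_smul, sum_pi_single', if_pos (mem_Icc.2 ⟨hj, hjN⟩)]
      ring
    have := hδ.2
    rw [← sub_nonneg, ← residual, key]
    linarith

theorem sum_coefResidual_add_coefTerminal (p : ℝ) (w : ℕ) {j N : ℕ} (hj : 1 ≤ j)
    (hjN : j ≤ N) :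
    ∑ k ∈ Icc j N, coefResidual p w k + coefTerminal p w N = w * coefSlot p w j := by
  induction N, hjN using Nat.le_induction with
  | base =>
    obtain ⟨i, rfl⟩ : ∃ i, j = i + 1 := ⟨j - 1, by omega⟩
    simp only [Icc_self, sum_singleton, coefResidual, coefTerminal, coefSlot,
      show i + 1 + w - 1 = i + w by omega, show w + (i + 1) = i + w + 1 by omega]
    ring
  | succ N hN ih =>
    rw [sum_Icc_succ_top (by omega), ← ih]
    simp only [coefResidual, coefTerminal, show N + 1 + w - 1 = N + w by omega,
      show w + (N + 1) = w + N + 1 by omega, add_comm N w]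
    ring

theorem coefSlot_succ (p : ℝ) (w : ℕ) {j : ℕ} (hj : 1 ≤ j) :
    coefSlot p w (j + 1) = (1 - p) * coefSlot p w j := by
  obtain ⟨i, rfl⟩ : ∃ i, j = i + 1 := ⟨j - 1, by omega⟩
  simp only [coefSlot, show i + 1 + 1 + w - 1 = i + w + 1 by omega,
    show i + 1 + w - 1 = i + w by omega]
  ring

theorem coefResidual_eq (p : ℝ) (w j : ℕ) : coefResidual p w j = p * w * coefSlot p w j := by
  simp only [coefResidual, coefSlot]
  ring

theorem coefSlot_pos (hp : 0 < p) (hp1 : p < 1) (w j : ℕ) : 0 < coefSlot p w j := by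
  have : 0 < 1 - p := by linarith
  unfold coefSlot; positivity

noncomputable def gain (γ p : ℝ) (w : ℕ) (x : ℕ → ℝ) (j : ℕ) : ℝ :=
  coefSlot p w j / (1 + γ * x j)

noncomputable def cost (B γ p : ℝ) (w N : ℕ) (x : ℕ → ℝ) (j : ℕ) : ℝ :=
  (∑ k ∈ Icc j N, coefResidual p w k / (1 + γ / w * residual B x k)
    + coefTerminal p w N / (1 + γ / w * residual B x N)) / w

theorem hasDerivAt_TN_add_smul (hγ : 0 ≤ γ) (hx : x ∈ adm B N) (v : ℕ → ℝ) :
    HasDerivAt (fun δ : ℝ => TN B γ p w N (x + δ • v))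
      ((∑ i ∈ Icc 1 N, coefSlot p w i * (γ * v i / (1 + γ * x i) / Real.log 2))
        + (∑ k ∈ Icc 1 N, coefResidual p w k *
            (γ / w * -(∑ i ∈ Icc 1 k, v i) / (1 + γ / w * residual B x k) / Real.log 2))
        + coefTerminal p w N *
            (γ / w * -(∑ i ∈ Icc 1 N, v i) / (1 + γ / w * residual B x N) / Real.log 2)) 0 := by
  have hu : ∀ i ∈ Icc 1 N, 1 + γ * x i ≠ 0 := fun i hi => by
    have := hx.1 i (mem_Icc.1 hi).1 (mem_Icc.1 hi).2
    positivity
  have hv : ∀ k ≤ N, 1 + γ / w * residual B x k ≠ 0 := fun k hk => by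
    have := residual_nonneg_of_mem_adm hx hk
    positivity
  simp only [TN_eq, residual_add_smul, Pi.add_apply, Pi.smul_apply, smul_eq_mul]
  have hslot := HasDerivAt.fun_sum (u := Icc 1 N) fun i hi =>
    (hasDerivAt_logb_one_add_mul 2 γ (x i) (v i) (hu i hi)).const_mul (coefSlot p w i)
  have hresid := HasDerivAt.fun_sum (u := Icc 1 N) fun k hk =>
    (hasDerivAt_logb_one_add_mul 2 (γ / w) (residual B x k) (-∑ i ∈ Icc 1 k, v i)
      (hv k (mem_Icc.1 hk).2)).const_mul (coefResidual p w k)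
  have hterm := (hasDerivAt_logb_one_add_mul 2 (γ / w) (residual B x N)
    (-∑ i ∈ Icc 1 N, v i) (hv N le_rfl)).const_mul (coefTerminal p w N)
  simpa only [zero_add] using (((hasDerivAt_const _ _).fun_add hslot).fun_add hresid).fun_add hterm

theorem hasDerivAt_TN_add_smul_single (hγ : 0 ≤ γ) (hx : x ∈ adm B N) {j : ℕ} (hj : 1 ≤ j)
    (hjN : j ≤ N) :
    HasDerivAt (fun δ : ℝ => TN B γ p w N (x + δ • Pi.single j 1))
      (γ / Real.log 2 * (gain γ p w x j - cost B γ p w N x j)) 0 := by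
  have hfilter : (Icc 1 N).filter (j ≤ ·) = Icc j N := by
    ext k; simp only [mem_filter, mem_Icc]; omega
  refine (hasDerivAt_TN_add_smul hγ hx (Pi.single j 1)).congr_deriv ?_
  rw [sum_eq_single_of_mem j (mem_Icc.2 ⟨hj, hjN⟩) fun i _ hij => by simp [hij]]
  simp only [sum_pi_single', mem_Icc, hj, hjN, true_and, if_true, Pi.single_eq_same, mul_one]
  have hsum : ∑ k ∈ Icc 1 N, coefResidual p w k *
      (γ / w * -(if j ≤ k then 1 else 0) / (1 + γ / w * residual B x k) / Real.log 2) =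
      -(γ / w / Real.log 2) * ∑ k ∈ Icc j N, coefResidual p w k / (1 + γ / w * residual B x k) := by
    rw [← hfilter, sum_filter, mul_sum]
    exact sum_congr rfl fun k _ => by split_ifs <;> ring
  rw [hsum, gain, cost]
  ring

theorem coefSlot_sub_cost (hw : (w : ℝ) ≠ 0) {j : ℕ} (hj : 1 ≤ j) (hjN : j ≤ N) :
    coefSlot p w j - cost B γ p w N x j =
      (∑ k ∈ Icc j N, coefResidual p w k * (1 - 1 / (1 + γ / w * residual B x k))
        + coefTerminal p w N * (1 - 1 / (1 + γ / w * residual B x N))) / w := by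
  rw [cost, eq_div_iff hw, sub_mul, div_mul_cancel₀ _ hw, mul_comm (coefSlot p w j),
    ← sum_coefResidual_add_coefTerminal p w hj hjN]
  simp only [mul_sub, mul_one, sum_sub_distrib, mul_one_div]
  ring

theorem cost_lt_coefSlot (hγ : 0 < γ) (hw : 0 < w) (hp : 0 < p) (hp1 : p < 1)
    (hr : ∀ k ≤ N, 0 ≤ residual B x k) (hrN : 0 < residual B x N) {j : ℕ} (hj : 1 ≤ j)
    (hjN : j ≤ N) : cost B γ p w N x j < coefSlot p w j := by
  have hw' : (0 : ℝ) < w := Nat.cast_pos.2 hw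
  have hp1' : 0 < 1 - p := by linarith
  rw [← sub_pos, coefSlot_sub_cost hw'.ne' hj hjN]
  refine div_pos (add_pos_of_nonneg_of_pos (sum_nonneg fun k hk => ?_) ?_) hw'
  · rw [coefResidual_eq]
    have := coefSlot_pos hp hp1 w k
    have := hr k (mem_Icc.1 hk).2
    refine mul_nonneg (by positivity) ?_
    rw [sub_nonneg, div_le_one (by positivity)]
    exact le_add_of_nonneg_right (by positivity)
  · refine mul_pos (by unfold coefTerminal; positivity) ?_
    rw [sub_pos, div_lt_one (by positivity)]
    exact lt_add_of_pos_right _ (by positivity)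

theorem cost_eq_coefSlot (hw : (w : ℝ) ≠ 0) {j : ℕ} (hj : 1 ≤ j) (hjN : j ≤ N)
    (hr : ∀ k ∈ Icc j N, residual B x k = 0) : cost B γ p w N x j = coefSlot p w j := by
  rw [eq_comm, ← sub_eq_zero, coefSlot_sub_cost hw hj hjN, hr N (mem_Icc.2 ⟨hjN, le_rfl⟩),
    sum_eq_zero fun k hk => by rw [hr k hk]; simp]
  simp

theorem gain_lt_coefSlot (hγ : 0 < γ) (hp : 0 < p) (hp1 : p < 1) {j : ℕ} (hxj : 0 < x j) :
    gain γ p w x j < coefSlot p w j :=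
  div_lt_self (coefSlot_pos hp hp1 w j) (lt_add_of_pos_right _ (by positivity))

theorem cost_self (hw : (w : ℝ) ≠ 0) (hN : 1 ≤ N) :
    cost B γ p w N x N = coefSlot p w N / (1 + γ / w * residual B x N) := by
  have := sum_coefResidual_add_coefTerminal p w hN le_rfl
  rw [Icc_self, sum_singleton] at this
  rw [cost, Icc_self, sum_singleton, ← add_div, this]
  field_simp

theorem cost_eq_add_cost_succ (hw : (w : ℝ) ≠ 0) {j : ℕ} (hjN : j < N) :
    cost B γ p w N x j =
      p * coefSlot p w j / (1 + γ / w * residual B x j) + cost B γ p w N x (j + 1) := by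
  rw [cost, cost, ← insert_Icc_add_one_left_eq_Icc hjN.le, sum_insert (by simp),
    coefResidual_eq]
  field_simp
  ring

theorem gain_sub_cost_mul_nonpos (hγ : 0 < γ) (hx : x ∈ adm B N)
    (hmax : IsMaxOn (TN B γ p w N) (adm B N) x) {j : ℕ} (hj : 1 ≤ j) (hjN : j ≤ N) {δ : ℝ}
    (hδ : δ ∈ Set.Icc (-x j) (residual B x N)) :
    (gain γ p w x j - cost B γ p w N x j) * δ ≤ 0 := by
  have hmax' : IsMaxOn (fun δ : ℝ => TN B γ p w N (x + δ • Pi.single j 1))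
      (Set.Icc (-x j) (residual B x N)) 0 :=
    hmax.comp_mapsTo (fun _ hδ => add_smul_single_mem_adm hx hj hjN hδ) (by simp)
  have h0 : (0 : ℝ) ∈ Set.Icc (-x j) (residual B x N) :=
    ⟨neg_nonpos.2 (hx.1 j hj hjN), residual_nonneg_of_mem_adm hx le_rfl⟩
  have := (hasDerivAt_TN_add_smul_single hγ.le hx hj hjN).mul_sub_nonpos_of_isMaxOn hmax'
    (convex_Icc _ _) h0 hδ
  rw [sub_zero, mul_assoc] at this
  exact nonpos_of_mul_nonpos_right this (div_pos hγ (Real.log_pos one_lt_two))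

/-- Otherwise let `j` be the first slot after which nothing is left: there
`cost j = coefSlot j > gain j`, so moving energy from slot `j` into the battery would
increase `T_N`. -/
theorem residual_pos_of_isMaxOn (hB : 0 < B) (hγ : 0 < γ) (hw : 0 < w) (hp : 0 < p)
    (hp1 : p < 1) (hx : x ∈ adm B N) (hmax : IsMaxOn (TN B γ p w N) (adm B N) x) :
    0 < residual B x N := by
  classical
  by_contra! h
  have hr : ∀ k ≤ N, 0 ≤ residual B x k := fun k hk => residual_nonneg_of_mem_adm hx hk
  have hrN : residual B x N = 0 := h.antisymm (hr N le_rfl)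
  have hex : ∃ k, residual B x k = 0 := ⟨N, hrN⟩
  obtain ⟨i, hi⟩ : ∃ i, Nat.find hex = i + 1 := Nat.exists_eq_add_one.2 <| Nat.pos_of_ne_zero
    fun h0 => by simpa [h0, residual_zero, hB.ne'] using Nat.find_spec hex
  have hjN : i + 1 ≤ N := hi ▸ Nat.find_min' hex hrN
  have hrj : residual B x (i + 1) = 0 := hi ▸ Nat.find_spec hex
  have hri : residual B x i ≠ 0 := Nat.find_min hex (by omega)
  have hxj : 0 < x (i + 1) := by
    have := hr i (by omega)
    rw [residual_succ] at hrj
    exact lt_of_le_of_ne (by linarith) (by contrapose! hri; linarith)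
  have hcost : cost B γ p w N x (i + 1) = coefSlot p w (i + 1) :=
    cost_eq_coefSlot (by positivity) (by omega) hjN fun k hk => le_antisymm
      (hrj ▸ residual_le_residual hx.1 (mem_Icc.1 hk).1 (mem_Icc.1 hk).2)
      (hr k (mem_Icc.1 hk).2)
  have hgain := gain_lt_coefSlot (w := w) hγ hp hp1 hxj
  have := gain_sub_cost_mul_nonpos hγ hx hmax (by omega) hjN
    ⟨le_rfl, (neg_nonpos.2 hxj.le).trans (hr N le_rfl)⟩
  nlinarith

theorem pos_of_isMaxOn (hB : 0 < B) (hγ : 0 < γ) (hw : 0 < w) (hp : 0 < p) (hp1 : p < 1)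
    (hx : x ∈ adm B N) (hmax : IsMaxOn (TN B γ p w N) (adm B N) x) {j : ℕ} (hj : 1 ≤ j)
    (hjN : j ≤ N) : 0 < x j := by
  have hrN := residual_pos_of_isMaxOn hB hγ hw hp hp1 hx hmax
  by_contra! hxj
  have hgain : gain γ p w x j = coefSlot p w j := by
    simp [gain, hxj.antisymm (hx.1 j hj hjN)]
  have hcost := cost_lt_coefSlot hγ hw hp hp1 (fun k hk => residual_nonneg_of_mem_adm hx hk)
    hrN hj hjN
  have := gain_sub_cost_mul_nonpos hγ hx hmax hj hjN ⟨by linarith [hx.1 j hj hjN], le_rfl⟩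
  nlinarith

theorem gain_eq_cost_of_isMaxOn (hB : 0 < B) (hγ : 0 < γ) (hw : 0 < w) (hp : 0 < p)
    (hp1 : p < 1) (hx : x ∈ adm B N) (hmax : IsMaxOn (TN B γ p w N) (adm B N) x) {j : ℕ}
    (hj : 1 ≤ j) (hjN : j ≤ N) : gain γ p w x j = cost B γ p w N x j := by
  have hrN := residual_pos_of_isMaxOn hB hγ hw hp hp1 hx hmax
  have hxj := pos_of_isMaxOn hB hγ hw hp hp1 hx hmax hj hjN
  have hup := gain_sub_cost_mul_nonpos hγ hx hmax hj hjN (δ := residual B x N)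
    ⟨by linarith, le_rfl⟩
  have hdown := gain_sub_cost_mul_nonpos hγ hx hmax hj hjN (δ := -x j) ⟨le_rfl, by linarith⟩
  nlinarith

/-- The first-order conditions of `T_N` at an interior point, solved for the allocation. -/
structure OptimalityConditions (B γ p : ℝ) (w N : ℕ) (x : ℕ → ℝ) : Prop where
  pos : ∀ j, 1 ≤ j → j ≤ N → 0 < x j
  residual_pos : 0 < residual B x N
  mul_eq_residual : (w : ℝ) * x N = residual B x N
  one_div_eq : ∀ j, 1 ≤ j → j < N →
    1 / (1 + γ * x j) = (1 - p) / (1 + γ * x (j + 1)) + p / (1 + γ / w * residual B x j)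

theorem optimalityConditions_of_isMaxOn (hB : 0 < B) (hγ : 0 < γ) (hw : 0 < w) (hp : 0 < p)
    (hp1 : p < 1) (hN : 1 ≤ N) (hx : x ∈ adm B N) (hmax : IsMaxOn (TN B γ p w N) (adm B N) x) :
    OptimalityConditions B γ p w N x := by
  have hw' : (w : ℝ) ≠ 0 := by positivity
  have hpos := fun j => pos_of_isMaxOn (j := j) hB hγ hw hp hp1 hx hmax
  have hfoc := fun j => gain_eq_cost_of_isMaxOn (j := j) hB hγ hw hp hp1 hx hmax
  have hu : ∀ j, 1 ≤ j → j ≤ N → 0 < 1 + γ * x j := fun j hj hjN => by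
    have := hpos j hj hjN; positivity
  have hv : ∀ k ≤ N, 0 < 1 + γ / w * residual B x k := fun k hk => by
    have := residual_nonneg_of_mem_adm hx hk; positivity
  refine ⟨hpos, residual_pos_of_isMaxOn hB hγ hw hp hp1 hx hmax, ?_, fun j hj hjN => ?_⟩
  · have h := hfoc N hN le_rfl
    rw [cost_self hw' hN, gain, div_eq_div_iff (hu N hN le_rfl).ne' (hv N le_rfl).ne'] at h
    have := mul_left_cancel₀ (coefSlot_pos hp hp1 w N).ne' h
    field_simp at this
    exact mul_left_cancel₀ hγ.ne' (by linarith)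
  · have h := hfoc j hj hjN.le
    rw [cost_eq_add_cost_succ hw' hjN, ← hfoc (j + 1) (by omega) hjN, gain, gain,
      coefSlot_succ p w hj] at h
    have := coefSlot_pos hp hp1 w j
    have := hu j hj hjN.le
    have := hu (j + 1) (by omega) hjN
    have := hv j hjN.le
    field_simp at h ⊢
    linear_combination h

namespace OptimalityConditions

theorem residual_pos_of_le (hx : OptimalityConditions B γ p w N x) {k : ℕ} (hk : k ≤ N) :
    0 < residual B x k :=
  hx.residual_pos.trans_le (residual_le_residual (fun i hi hiN => (hx.pos i hi hiN).le) hk le_rfl)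

theorem apply_last_le (hx : OptimalityConditions B γ p w N x) (hγ : 0 < γ) (hw : 0 < w)
    (hp : 0 ≤ p) (hp1 : p ≤ 1) {j : ℕ} (hj : 1 ≤ j) (hjN : j ≤ N) : x N ≤ x j := by
  have hw' : (0 : ℝ) < w := Nat.cast_pos.2 hw
  suffices x N ≤ x j ∧ (w : ℝ) * x j ≤ residual B x j from this.1
  refine Nat.decreasingInduction' (fun k hkN hjk ih => ?_) hjN ⟨le_rfl, hx.mul_eq_residual.le⟩
  have hxk := hx.pos (k + 1) (by omega) hkN
  have huv : 1 + γ * x (k + 1) ≤ 1 + γ / w * residual B x k := by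
    rw [one_add_mul_le_one_add_div_mul_iff hγ hw']
    linarith [residual_succ B x k]
  obtain ⟨hu, hv⟩ := le_and_le_of_one_div_eq hp hp1 (by positivity) huv
    (hx.one_div_eq k (by omega) hkN)
  exact ⟨ih.1.trans (by nlinarith), (one_add_mul_le_one_add_div_mul_iff hγ hw').1 hv⟩

theorem residual_lt_mul_div (hx : OptimalityConditions B γ p w N x) (hγ : 0 < γ) (hw : 0 < w)
    (hp : 0 ≤ p) (hp1 : p ≤ 1) (hN : 1 ≤ N) : residual B x N < w * B / N := by
  have hsum : N • x N ≤ ∑ i ∈ Icc 1 N, x i := by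
    simpa using card_nsmul_le_sum (Icc 1 N) x (x N) fun i hi =>
      hx.apply_last_le hγ hw hp hp1 (mem_Icc.1 hi).1 (mem_Icc.1 hi).2
  have hNR : (0 : ℝ) < N := by exact_mod_cast hN
  have hw' : (0 : ℝ) < w := Nat.cast_pos.2 hw
  rw [nsmul_eq_mul] at hsum
  rw [lt_div_iff₀ hNR, ← hx.mul_eq_residual]
  have := hx.residual_pos
  simp only [residual] at this
  nlinarith

/-- Otherwise, by backward induction, the optimum for horizon `N` is dominated slotwise by the
optimum `y` for horizon `N + 1` shifted by one slot, which leaves no room for `y 1 > 0`. -/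
theorem residual_succ_lt {y : ℕ → ℝ} (hx : OptimalityConditions B γ p w N x)
    (hy : OptimalityConditions B γ p w (N + 1) y) (hγ : 0 < γ) (hw : 0 < w) (hp : 0 ≤ p)
    (hp1 : p ≤ 1) (hN : 1 ≤ N) : residual B y (N + 1) < residual B x N := by
  have hw' : (0 : ℝ) < w := Nat.cast_pos.2 hw
  by_contra! h
  have key : ∀ j, 1 ≤ j → j ≤ N → x j ≤ y (j + 1) ∧ residual B x j ≤ residual B y (j + 1) := by
    intro j hj hjN
    refine Nat.decreasingInduction' (fun k hkN hjk ih => ?_) hjN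
      ⟨le_of_mul_le_mul_left (by rwa [hx.mul_eq_residual, hy.mul_eq_residual]) hw', h⟩
    have hr : residual B x k ≤ residual B y (k + 1) := by
      linarith [residual_succ B x k, residual_succ B y (k + 1)]
    have hxk := hx.pos (k + 1) (by omega) hkN
    have hyk := hy.pos (k + 1) (by omega) (by omega)
    have hrk := hx.residual_pos_of_le hkN.le
    have := le_of_one_div_eq_of_le hp hp1 (by positivity) (by positivity) (by positivity)
      (hx.one_div_eq k (by omega) hkN) (hy.one_div_eq (k + 1) (by omega) (by omega))
      (by nlinarith) (by gcongr)
    exact ⟨le_of_mul_le_mul_left (by linarith) hγ, hr⟩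
  have := key 1 le_rfl hN
  have := hy.pos 1 le_rfl (by omega)
  linarith [residual_succ B x 0, residual_succ B y 0, residual_succ B y 1, residual_zero B x,
    residual_zero B y]

end OptimalityConditions

end TN

/-- Let `B^{(N)} = B - ∑_{i=1}^N ξ_i^{(N)*}` for the maximizer `ξ^{(N)*}` of `T_N`.
Then `B^{(N)} > 0`, the sequence `(B^{(N)})` is strictly decreasing, `B^{(N)} < wB/N`,
and `B^{(N)} → 0`. -/
theorem residual_battery_tendsto_zero (B γ p : ℝ) (w : ℕ) (hB : 0 < B) (hγ : 0 < γ)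
    (hw : 1 ≤ w) (hp : 0 < p) (hp1 : p < 1) (ξ : ℕ → ℕ → ℝ)
    (hξ : ∀ N, 1 ≤ N → ξ N ∈ adm B N)
    (hmax : ∀ N, 1 ≤ N → ∀ η ∈ adm B N, TN B γ p w N η ≤ TN B γ p w N (ξ N)) :
    (∀ N, 1 ≤ N → 0 < B - ∑ i ∈ Finset.Icc 1 N, ξ N i)
    ∧ (∀ N, 1 ≤ N →
        B - ∑ i ∈ Finset.Icc 1 (N + 1), ξ (N + 1) i
          < B - ∑ i ∈ Finset.Icc 1 N, ξ N i)
    ∧ (∀ N, 1 ≤ N → B - ∑ i ∈ Finset.Icc 1 N, ξ N i < w * B / N)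
    ∧ Filter.Tendsto (fun N => B - ∑ i ∈ Finset.Icc 1 N, ξ N i) Filter.atTop
        (nhds 0) := by
  have hopt : ∀ N, 1 ≤ N → TN.OptimalityConditions B γ p w N (ξ N) := fun N hN =>
    TN.optimalityConditions_of_isMaxOn hB hγ hw hp hp1 hN (hξ N hN) (isMaxOn_iff.2 (hmax N hN))
  have hbound : ∀ N, 1 ≤ N → TN.residual B (ξ N) N < w * B / N := fun N hN =>
    (hopt N hN).residual_lt_mul_div hγ hw hp.le hp1.le hN
  refine ⟨fun N hN => (hopt N hN).residual_pos, fun N hN => ?_, hbound, ?_⟩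
  · exact (hopt N hN).residual_succ_lt (hopt (N + 1) (by omega)) hγ hw hp.le hp1.le hN
  · exact tendsto_of_tendsto_of_tendsto_of_le_of_le' tendsto_const_nhds
      (tendsto_const_div_atTop_nhds_zero_nat _)
      (Filter.eventually_atTop.2 ⟨1, fun N hN => (hopt N hN).residual_pos.le⟩)
      (Filter.eventually_atTop.2 ⟨1, fun N hN => (hbound N hN).le⟩)
end

section
/- Let B, γ > 0, w ≥ 1 integer, p ∈ (0,1). If (ξ_j^*)_{j≥1} is a nonnegative sequence satisfying the recursion (1-p)/(1+γξ^*_{j+1}) = 1/(1+γξ^*_j) - p/(1 + (γ/w)(B - ∑_{i=1}^j ξ^*_i)) for all j ≥ 1 together with ∑_{j=1}^∞ ξ^*_j = B, then such a sequence is unique: any two sequences satisfying both conditions coincide. -/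
/-!
The recursion is order preserving: if `η j ≤ ξ j` and the partial sums up to `j` satisfy the same
inequality, then the right-hand side for `ξ` is at most the one for `η`, which forces
`η (j + 1) ≤ ξ (j + 1)`. Hence two solutions ordered at `j = 1` are ordered termwise, and since
both have total sum `B`, they agree term by term.
-/

open Finset

theorem sum_Icc_one_eq_sum_range {M : Type*} [AddCommMonoid M] (f : ℕ → M) (j : ℕ) :
    ∑ i ∈ Icc 1 j, f i = ∑ k ∈ range j, f (k + 1) := by
  rw [range_eq_Ico, sum_Ico_add' f 0 j 1]
  rfl

theorem sum_Icc_one_le_tsum {f : ℕ → ℝ} (hf : ∀ j, 1 ≤ j → 0 ≤ f j)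
    (hs : Summable fun j => f (j + 1)) (j : ℕ) :
    ∑ i ∈ Icc 1 j, f i ≤ ∑' k, f (k + 1) := by
  rw [sum_Icc_one_eq_sum_range]
  exact hs.sum_le_tsum _ fun k _ => hf (k + 1) k.succ_pos

theorem Summable.eq_of_le_of_tsum_eq {ι : Type*} {f g : ι → ℝ} (hfg : f ≤ g) (hf : Summable f)
    (hg : Summable g) (h : ∑' i, f i = ∑' i, g i) : f = g := by
  by_contra hne
  obtain ⟨i, hi⟩ := Function.ne_iff.mp hne
  exact (hf.tsum_lt_tsum hfg ((hfg i).lt_of_ne hi) hg).ne h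

/-- The parameter `c` stands for the paper's `γ / w`. -/
def SatisfiesRecursion (B γ c p : ℝ) (ξ : ℕ → ℝ) : Prop :=
  ∀ j, 1 ≤ j →
    (1 - p) / (1 + γ * ξ (j + 1)) = 1 / (1 + γ * ξ j) - p / (1 + c * (B - ∑ i ∈ Icc 1 j, ξ i))

theorem le_of_recursion_step {B γ c p a b a' b' s t : ℝ} (hγ : 0 < γ) (hc : 0 ≤ c)
    (hp : 0 ≤ p) (hp1 : p < 1) (hb : 0 ≤ b) (ha' : 0 ≤ a') (hb' : 0 ≤ b') (hba : b ≤ a)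
    (hts : t ≤ s) (hsB : s ≤ B)
    (ha_rec : (1 - p) / (1 + γ * a') = 1 / (1 + γ * a) - p / (1 + c * (B - s)))
    (hb_rec : (1 - p) / (1 + γ * b') = 1 / (1 + γ * b) - p / (1 + c * (B - t))) :
    b' ≤ a' := by
  have hs : 0 ≤ B - s := sub_nonneg.mpr hsB
  have h_first : 1 / (1 + γ * a) ≤ 1 / (1 + γ * b) := by gcongr
  have h_second : p / (1 + c * (B - t)) ≤ p / (1 + c * (B - s)) := by gcongr
  have h : (1 - p) / (1 + γ * a') ≤ (1 - p) / (1 + γ * b') := by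
    rw [ha_rec, hb_rec]
    linarith
  rw [div_le_div_iff_of_pos_left (by linarith) (by positivity) (by positivity)] at h
  exact le_of_mul_le_mul_left (by linarith) hγ

theorem le_of_satisfiesRecursion {B γ c p : ℝ} {ξ η : ℕ → ℝ} (hγ : 0 < γ) (hc : 0 ≤ c)
    (hp : 0 ≤ p) (hp1 : p < 1) (hξ0 : ∀ j, 1 ≤ j → 0 ≤ ξ j) (hη0 : ∀ j, 1 ≤ j → 0 ≤ η j)
    (hξ : SatisfiesRecursion B γ c p ξ) (hη : SatisfiesRecursion B γ c p η)
    (hξB : ∀ j, ∑ i ∈ Icc 1 j, ξ i ≤ B) (h1 : η 1 ≤ ξ 1) :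
    ∀ j, 1 ≤ j → η j ≤ ξ j := by
  suffices h : ∀ j, 1 ≤ j → η j ≤ ξ j ∧ ∑ i ∈ Icc 1 j, η i ≤ ∑ i ∈ Icc 1 j, ξ i from
    fun j hj => (h j hj).1
  intro j hj
  induction j, hj using Nat.le_induction with
  | base => simpa using h1
  | succ j hj ih =>
    have hstep : η (j + 1) ≤ ξ (j + 1) :=
      le_of_recursion_step hγ hc hp hp1 (hη0 j hj) (hξ0 _ (by omega)) (hη0 _ (by omega))
        ih.1 ih.2 (hξB j) (hξ j hj) (hη j hj)
    refine ⟨hstep, ?_⟩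
    rw [sum_Icc_succ_top (by omega), sum_Icc_succ_top (by omega)]
    exact add_le_add ih.2 hstep

theorem optimal_sequence_unique_general (B γ p : ℝ) (w : ℕ) (hγ : 0 < γ)
    (hp : 0 < p) (hp1 : p < 1) (ξ η : ℕ → ℝ)
    (hξ0 : ∀ j, 1 ≤ j → 0 ≤ ξ j) (hη0 : ∀ j, 1 ≤ j → 0 ≤ η j)
    (hξrec : ∀ j, 1 ≤ j →
      (1 - p) / (1 + γ * ξ (j + 1))
        = 1 / (1 + γ * ξ j) - p / (1 + (γ / w) * (B - ∑ i ∈ Finset.Icc 1 j, ξ i)))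
    (hηrec : ∀ j, 1 ≤ j →
      (1 - p) / (1 + γ * η (j + 1))
        = 1 / (1 + γ * η j) - p / (1 + (γ / w) * (B - ∑ i ∈ Finset.Icc 1 j, η i)))
    (hξsummable : Summable (fun j : ℕ => ξ (j + 1)))
    (hηsummable : Summable (fun j : ℕ => η (j + 1)))
    (hξsum : ∑' j : ℕ, ξ (j + 1) = B) (hηsum : ∑' j : ℕ, η (j + 1) = B) :
    ∀ j, 1 ≤ j → ξ j = η j := by
  wlog h1 : η 1 ≤ ξ 1 generalizing ξ η
  · exact fun j hj => (this η ξ hη0 hξ0 hηrec hξrec hηsummable hξsummable hηsum hξsum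
      (le_of_not_ge h1) j hj).symm
  have hle : ∀ j, 1 ≤ j → η j ≤ ξ j :=
    le_of_satisfiesRecursion hγ (by positivity) hp.le hp1 hξ0 hη0 hξrec hηrec
      (fun j => hξsum ▸ sum_Icc_one_le_tsum hξ0 hξsummable j) h1
  have heq : (fun k => η (k + 1)) = fun k => ξ (k + 1) :=
    hηsummable.eq_of_le_of_tsum_eq (fun k => hle (k + 1) k.succ_pos) hξsummable
      (hηsum.trans hξsum.symm)
  intro j hj
  obtain ⟨k, rfl⟩ := Nat.exists_eq_add_of_le' hj
  exact (congrFun heq k).symm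

/-- A nonnegative sequence satisfying the stationarity recursion for all `j ≥ 1`
together with the total-energy constraint `∑_{j=1}^∞ ξ_j = B` is unique. -/
theorem optimal_sequence_unique (B γ p : ℝ) (w : ℕ) (hB : 0 < B) (hγ : 0 < γ)
    (hw : 1 ≤ w) (hp : 0 < p) (hp1 : p < 1) (ξ η : ℕ → ℝ)
    (hξ0 : ∀ j, 1 ≤ j → 0 ≤ ξ j) (hη0 : ∀ j, 1 ≤ j → 0 ≤ η j)
    (hξrec : ∀ j, 1 ≤ j →
      (1 - p) / (1 + γ * ξ (j + 1))
        = 1 / (1 + γ * ξ j) - p / (1 + (γ / w) * (B - ∑ i ∈ Finset.Icc 1 j, ξ i)))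
    (hηrec : ∀ j, 1 ≤ j →
      (1 - p) / (1 + γ * η (j + 1))
        = 1 / (1 + γ * η j) - p / (1 + (γ / w) * (B - ∑ i ∈ Finset.Icc 1 j, η i)))
    (hξsummable : Summable (fun j : ℕ => ξ (j + 1)))
    (hηsummable : Summable (fun j : ℕ => η (j + 1)))
    (hξsum : ∑' j : ℕ, ξ (j + 1) = B) (hηsum : ∑' j : ℕ, η (j + 1) = B) :
    ∀ j, 1 ≤ j → ξ j = η j :=
  optimal_sequence_unique_general B γ p w hγ hp hp1 ξ η hξ0 hη0 hξrec hηrec hξsummable hηsummable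
    hξsum hηsum
end
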